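/- arXiv:solv-int/9704010 — 2 statements merged into one kernel-verified Lean document; each statement's English description precedes it below -/
import Mathlib

section
/- For each k ≥ 1 there exist unique constants c_0, c_1, …, c_{k-1} ∈ R such that the series H^(k) := h^(k) + Σ_{l=0}^{k-1} c_l·h^(l) has vanishing coefficient of z^m for all m with 0 ≤ m ≤ k−1; for this choice H^(k) = z^k + Σ_{l ≥ 1} H^k_l z^{-l} for some H^k_l ∈ R, and moreover c_{k-1} = 0. -/
/-
We model the ring `R((z⁻¹))` of formal Laurent series in `z⁻¹` over `R`
as `HahnSeries ℤ R`, with the convention that the index `n : ℤ` records the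
coefficient of `z^(-n)`; thus the coefficient of `zᵐ` in `f` is `f.coeff (-m)`.
-/

/-- The coefficientwise extension of an additive map `d : R → R` to `R((z⁻¹))`. -/
noncomputable def coeffExt {R : Type*} [CommRing R] (d : R →+ R)
    (f : HahnSeries ℤ R) : HahnSeries ℤ R where
  coeff n := d (f.coeff n)
  isPWO_support' := f.isPWO_support'.mono (fun n hn => by
    simp only [Function.mem_support] at hn ⊢
    exact fun h => hn (by rw [h, map_zero]))

/-- The Faà di Bruno iterates `h^(0) = 1`, `h^(k+1) = d(h^(k)) + h * h^(k)` in `R((z⁻¹))`. -/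
noncomputable def fdb {R : Type*} [CommRing R] (d : R →+ R)
    (h : HahnSeries ℤ R) : ℕ → HahnSeries ℤ R
  | 0 => 1
  | k + 1 => coeffExt d (fdb d h k) + h * fdb d h k

/-!
Write `h^(l) = z^l + a_l z^(l-1) + O(z^(l-2))`.  Since `h = z + O(z⁻¹)` and `d 1 = 0`, the
recursion gives `a_(l+1) = d 1 + a_l = a_l`, so `a_l = 0` for all `l`.  Consequently the
coefficients of `z^m` (`m < k`) in `h^(0), …, h^(k-1)` form a unitriangular matrix, and the
conditions on the `c_l` are a linear system with this matrix: it has a unique solution.  Adding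
multiples of `h^(l)` with `l < k` does not touch the coefficients of `z^m` for `m ≥ k`, and the
equation for `z^(k-1)` reads `a_k + c_(k-1) = 0`.
-/

open HahnSeries Matrix

namespace HahnSeries

theorem coeff_eq_zero_of_lt_of_le_orderTop {Γ R : Type*} [PartialOrder Γ] [Zero R]
    {x : HahnSeries Γ R} {i j : Γ} (hij : i < j) (hj : (j : WithTop Γ) ≤ x.orderTop) :
    x.coeff i = 0 :=
  coeff_eq_zero_of_lt_orderTop ((WithTop.coe_lt_coe.2 hij).trans_le hj)

variable {R : Type*} [Ring R] {h : HahnSeries ℤ R}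

theorem one_le_orderTop_sub_single_neg_one (hz : h.coeff (-1) = 1) (h0 : h.coeff 0 = 0)
    (hpos : ∀ m : ℤ, 2 ≤ m → h.coeff (-m) = 0) :
    1 ≤ (h - single (-1) 1).orderTop := by
  refine le_orderTop_iff_forall.2 fun j hj => ?_
  have hj : j < 1 := by exact_mod_cast hj
  rw [coeff_sub, coeff_single]
  obtain rfl | rfl | hj : j = -1 ∨ j = 0 ∨ j ≤ -2 := by omega
  · simp [hz]
  · simp [h0]
  · rw [if_neg (by omega), sub_zero]
    simpa using hpos (-j) (by omega)

theorem neg_one_le_orderTop (hh : 1 ≤ (h - single (-1) 1).orderTop) :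
    ((-1 : ℤ) : WithTop ℤ) ≤ h.orderTop := by
  rw [← add_sub_cancel (single (-1) (1 : R)) h]
  refine le_trans (le_min orderTop_single_le (le_trans ?_ hh)) min_orderTop_le_orderTop_add
  exact_mod_cast (by norm_num : (-1 : ℤ) ≤ 1)

/-- `single (-1) 1` is `z`: below `1 + b`, the `O(z⁻¹)` part of `h` does not contribute. -/
theorem coeff_mul_eq_coeff_add_one {g : HahnSeries ℤ R} {b n : ℤ}
    (hh : 1 ≤ (h - single (-1) 1).orderTop) (hg : b ≤ g.orderTop) (hn : n ≤ b) :
    (h * g).coeff n = g.coeff (n + 1) := by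
  have hz : (single (-1) (1 : R) * g).coeff n = g.coeff (n + 1) := by
    simpa using coeff_single_mul_add (r := (1 : R)) (x := g) (a := n + 1) (b := -1)
  have hrest : ((h - single (-1) 1) * g).coeff n = 0 :=
    coeff_eq_zero_of_lt_of_le_orderTop (j := 1 + b) (by omega)
      ((add_le_add hh hg).trans orderTop_add_le_mul)
  rw [← add_sub_cancel (single (-1) (1 : R)) h, add_mul, coeff_add, hz, hrest, add_zero]

end HahnSeries

section FaaDiBruno

variable {R : Type*} [CommRing R]

@[simp]
theorem coeff_coeffExt (d : R →+ R) (f : HahnSeries ℤ R) (n : ℤ) :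
    (coeffExt d f).coeff n = d (f.coeff n) :=
  rfl

theorem orderTop_le_orderTop_coeffExt (d : R →+ R) (f : HahnSeries ℤ R) :
    f.orderTop ≤ (coeffExt d f).orderTop :=
  le_orderTop_iff_forall.2 fun j hj => by
    rw [coeff_coeffExt, coeff_eq_zero_of_lt_orderTop hj, map_zero]

variable {d : R →+ R} {h : HahnSeries ℤ R}

theorem neg_le_orderTop_fdb (hh : 1 ≤ (h - single (-1) 1).orderTop) (k : ℕ) :
    ((-k : ℤ) : WithTop ℤ) ≤ (fdb d h k).orderTop := by
  induction k with
  | zero => simpa [fdb] using orderTop_single_le (a := (0 : ℤ)) (r := (1 : R))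
  | succ k ih =>
    refine le_trans (le_min ?_ ?_) min_orderTop_le_orderTop_add
    · refine le_trans ?_ (ih.trans (orderTop_le_orderTop_coeffExt d _))
      exact_mod_cast (by omega : -((k + 1 : ℕ) : ℤ) ≤ -k)
    · refine le_trans ?_ ((add_le_add (neg_one_le_orderTop hh) ih).trans orderTop_add_le_mul)
      exact_mod_cast (by omega : -((k + 1 : ℕ) : ℤ) ≤ -1 + -k)

theorem coeff_fdb_succ (hh : 1 ≤ (h - single (-1) 1).orderTop) {k : ℕ} {n : ℤ} (hn : n ≤ -k) :
    (fdb d h (k + 1)).coeff n = d ((fdb d h k).coeff n) + (fdb d h k).coeff (n + 1) := by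
  rw [fdb, coeff_add, coeff_coeffExt,
    coeff_mul_eq_coeff_add_one hh (neg_le_orderTop_fdb hh k) hn]

theorem coeff_fdb_neg_self (hh : 1 ≤ (h - single (-1) 1).orderTop) (k : ℕ) :
    (fdb d h k).coeff (-k) = 1 := by
  induction k with
  | zero => simp [fdb]
  | succ k ih =>
    have hbelow : (fdb d h k).coeff (-(k + 1 : ℕ)) = 0 :=
      coeff_eq_zero_of_lt_of_le_orderTop (by omega) (neg_le_orderTop_fdb hh k)
    have hk : -((k + 1 : ℕ) : ℤ) + 1 = -k := by push_cast; ring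
    rw [coeff_fdb_succ hh (by omega), hbelow, map_zero, zero_add, hk, ih]

theorem coeff_fdb_neg_self_add_one (hh : 1 ≤ (h - single (-1) 1).orderTop) (hd : d 1 = 0)
    (k : ℕ) : (fdb d h k).coeff (-k + 1) = 0 := by
  induction k with
  | zero => simp [fdb]
  | succ k ih =>
    have hk : -((k + 1 : ℕ) : ℤ) + 1 = -k := by push_cast; ring
    rw [hk, coeff_fdb_succ hh le_rfl, coeff_fdb_neg_self hh, hd, ih, add_zero]

end FaaDiBruno

namespace Matrix

variable {m R : Type*} [Fintype m] [LinearOrder m] [CommRing R] {A : Matrix m m R}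

theorem IsUpperTriangular.mulVec_bijective (hA : A.IsUpperTriangular)
    (hdiag : ∀ i, IsUnit (A i i)) : Function.Bijective A.mulVec := by
  have hunit : IsUnit A := (isUnit_iff_isUnit_det A).2 <| by
    rw [det_of_isUpperTriangular hA]
    exact IsUnit.prod_iff.2 fun i _ => hdiag i
  exact ⟨mulVec_injective_of_isUnit hunit, mulVec_surjective_iff_isUnit.2 hunit⟩

theorem IsUpperTriangular.mulVec_apply_of_isTop (hA : A.IsUpperTriangular) (v : m → R) {i : m}
    (hi : IsTop i) : (A *ᵥ v) i = A i i * v i :=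
  Finset.sum_eq_single i (fun j _ hji => mul_eq_zero_of_left (hA ((hi j).lt_of_ne hji)) _)
    (by simp)

end Matrix

section Unitriangular

variable {R : Type*} [CommRing R] {f : ℕ → HahnSeries ℤ R} {k : ℕ}

def coeffMatrix (f : ℕ → HahnSeries ℤ R) (k : ℕ) : Matrix (Fin k) (Fin k) R :=
  Matrix.of fun i j => (f j).coeff (-i)

theorem coeff_add_sum_smul_neg (g : HahnSeries ℤ R) (c : Fin k → R) (i : Fin k) :
    (g + ∑ l : Fin k, c l • f l).coeff (-i) = g.coeff (-i) + (coeffMatrix f k *ᵥ c) i := by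
  simp [coeff_sum, coeffMatrix, mulVec, dotProduct, mul_comm]

theorem coeff_add_sum_smul_eq_zero_iff (g : HahnSeries ℤ R) (c : Fin k → R) :
    (∀ m : ℕ, m < k → (g + ∑ l : Fin k, c l • f l).coeff (-(m : ℤ)) = 0) ↔
      coeffMatrix f k *ᵥ c = -fun i : Fin k => g.coeff (-i) := by
  rw [funext_iff, Fin.forall_iff]
  refine forall₂_congr fun m hm => ?_
  rw [coeff_add_sum_smul_neg g c ⟨m, hm⟩, Pi.neg_apply, add_eq_zero_iff_eq_neg']

theorem coeffMatrix_isUpperTriangular (hf : ∀ l : ℕ, ((-l : ℤ) : WithTop ℤ) ≤ (f l).orderTop) :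
    (coeffMatrix f k).IsUpperTriangular := fun i j (hji : j < i) =>
  coeff_eq_zero_of_lt_of_le_orderTop (by omega) (hf j)

theorem existsUnique_coeff_add_sum_smul_eq_zero
    (hf : ∀ l : ℕ, ((-l : ℤ) : WithTop ℤ) ≤ (f l).orderTop)
    (hlead : ∀ l : ℕ, (f l).coeff (-l) = 1) (g : HahnSeries ℤ R) (k : ℕ) :
    ∃! c : Fin k → R, ∀ m : ℕ, m < k → (g + ∑ l : Fin k, c l • f l).coeff (-(m : ℤ)) = 0 := by
  have hbij := (coeffMatrix_isUpperTriangular (k := k) hf).mulVec_bijective fun i => by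
    simp [coeffMatrix, hlead]
  simpa only [coeff_add_sum_smul_eq_zero_iff] using hbij.existsUnique _

theorem coeff_add_sum_smul_of_le (hf : ∀ l : ℕ, ((-l : ℤ) : WithTop ℤ) ≤ (f l).orderTop)
    (g : HahnSeries ℤ R) (c : Fin k → R) {n : ℤ} (hn : n ≤ -k) :
    (g + ∑ l : Fin k, c l • f l).coeff n = g.coeff n := by
  rw [coeff_add, coeff_sum, Finset.sum_eq_zero, add_zero]
  intro l _
  rw [coeff_smul, coeff_eq_zero_of_lt_of_le_orderTop (by omega) (hf l), smul_zero]

theorem coeff_add_sum_smul_neg_last (hf : ∀ l : ℕ, ((-l : ℤ) : WithTop ℤ) ≤ (f l).orderTop)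
    (hlead : ∀ l : ℕ, (f l).coeff (-l) = 1) (g : HahnSeries ℤ R) {n : ℕ} (c : Fin (n + 1) → R) :
    (g + ∑ l : Fin (n + 1), c l • f l).coeff (-n) = g.coeff (-n) + c (Fin.last n) := by
  have hlast := coeff_add_sum_smul_neg (f := f) g c (Fin.last n)
  rw [Fin.val_last] at hlast
  rw [hlast, (coeffMatrix_isUpperTriangular hf).mulVec_apply_of_isTop c Fin.le_last]
  simp [coeffMatrix, hlead]

end Unitriangular

/-- Let `h = z + Σ_{l ≥ 1} h_l z^(-l)` in `R((z⁻¹))`.  For each `k ≥ 1` there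
exist unique constants `c_0, …, c_(k-1) ∈ R` such that
`H^(k) := h^(k) + Σ_{l=0}^{k-1} c_l • h^(l)` has vanishing coefficient of `z^m`
for all `0 ≤ m ≤ k-1`; for this choice `H^(k) = z^k + Σ_{l ≥ 1} H^k_l z^(-l)`
(i.e. the coefficient of `z^k` is `1` and the coefficients of `z^m` vanish
for all `m > k`), and moreover `c_(k-1) = 0`. -/
theorem faa_di_bruno_unique_constants
    {R : Type*} [CommRing R] (d : R →+ R)
    (hd : ∀ a b : R, d (a * b) = a * d b + d a * b)
    (h : HahnSeries ℤ R)
    (hz : h.coeff (-1) = 1)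
    (h0 : h.coeff 0 = 0)
    (hpos : ∀ m : ℤ, 2 ≤ m → h.coeff (-m) = 0)
    (k : ℕ) (hk : 1 ≤ k) :
    (∃! c : Fin k → R,
      ∀ m : ℕ, m < k →
        (fdb d h k + ∑ l : Fin k, c l • fdb d h l).coeff (-(m : ℤ)) = 0) ∧
    (∀ c : Fin k → R,
      (∀ m : ℕ, m < k →
        (fdb d h k + ∑ l : Fin k, c l • fdb d h l).coeff (-(m : ℤ)) = 0) →
      (fdb d h k + ∑ l : Fin k, c l • fdb d h l).coeff (-(k : ℤ)) = 1 ∧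
      (∀ m : ℤ, (k : ℤ) < m →
        (fdb d h k + ∑ l : Fin k, c l • fdb d h l).coeff (-m) = 0) ∧
      c ⟨k - 1, by omega⟩ = 0) := by
  have hh := one_le_orderTop_sub_single_neg_one hz h0 hpos
  have hd1 : d 1 = 0 := by simpa using hd 1 1
  have horder := neg_le_orderTop_fdb (d := d) hh
  have hlead := coeff_fdb_neg_self (d := d) hh
  refine ⟨existsUnique_coeff_add_sum_smul_eq_zero horder hlead _ k,
    fun c hc => ⟨?_, fun m hm => ?_, ?_⟩⟩
  · rw [coeff_add_sum_smul_of_le horder _ _ le_rfl, hlead]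
  · rw [coeff_add_sum_smul_of_le horder _ _ (by omega)]
    exact coeff_eq_zero_of_lt_of_le_orderTop (by omega) (horder k)
  · obtain ⟨n, rfl⟩ := Nat.exists_eq_add_of_le' hk
    have hlast := hc n (by omega)
    have hn : -(n : ℤ) = -((n + 1 : ℕ) : ℤ) + 1 := by push_cast; ring
    rwa [coeff_add_sum_smul_neg_last horder hlead, hn, coeff_fdb_neg_self_add_one hh hd1,
      zero_add] at hlast
end

section
/- Assume the constraint h^(2) − 2h_1 = z² holds in R((z⁻¹)), and assume that the three elements h_3 − h_1², h_4 − h_1h_2, h_5 − h_1h_3 of R are constants, i.e. are annihilated by d. Then (d(h_1))² = 4h_1³ + 8(h_3 − h_1²)·h_1 + 8(h_5 − h_1h_3); in other words, under the KdV reduction H^(2) = z² with the higher flow stationary, h_1 satisfies the Weierstrass equation of an elliptic curve. -/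
/-!
Comparing the coefficients of `z⁻¹`, `z⁻²`, `z⁻⁴` in `h^(2) - 2h₁ = d h + h² - 2h₁ = z²` gives
`d h₁ = -2h₂`, `d h₂ = -2h₃ - h₁²` and `d h₄ = -2h₅ - 2h₁h₃ - h₂²`. Stationarity of `h₄ - h₁h₂`
replaces `d h₄` by `d (h₁h₂) = h₁ d h₂ + h₂ d h₁`, and the first two relations then leave
`h₂² = 2h₅ - h₁³`, so `(d h₁)² = 4h₂² = 8h₅ - 4h₁³`, which is the right-hand side.
-/

open HahnSeries

theorem HahnSeries.coeff_mul_eq_zero_of_forall_add_ne {Γ R : Type*} [PartialOrder Γ]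
    [AddCommMonoid Γ] [IsOrderedCancelAddMonoid Γ] [NonUnitalNonAssocSemiring R]
    {f g : HahnSeries Γ R} {n : Γ} (h : ∀ i j, f.coeff i ≠ 0 → g.coeff j ≠ 0 → i + j ≠ n) :
    (f * g).coeff n = 0 := by
  by_contra hn
  obtain ⟨i, hi, j, hj, hij⟩ := support_mul_subset hn
  exact h i j hi hj hij

theorem HahnSeries.coeff_mul_eq_of_coeff_eq {Γ R : Type*} [AddCommGroup Γ] [LinearOrder Γ]
    [IsOrderedAddMonoid Γ] [Ring R] {f f' g g' : HahnSeries Γ R} {a b n : Γ}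
    (hf' : ∀ i < a, f'.coeff i = 0) (hg : ∀ j < b, g.coeff j = 0)
    (hff' : ∀ i ≤ n - b, f.coeff i = f'.coeff i) (hgg' : ∀ j ≤ n - a, g.coeff j = g'.coeff j) :
    (f * g).coeff n = (f' * g').coeff n := by
  have hleft : ((f - f') * g).coeff n = 0 := by
    refine coeff_mul_eq_zero_of_forall_add_ne fun i j hi hj => ne_of_gt ?_
    have hi : n - b < i := lt_of_not_ge fun hle => hi (by rw [coeff_sub, hff' i hle, sub_self])
    have hj : b ≤ j := le_of_not_gt fun hlt => hj (hg j hlt)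
    simpa using add_lt_add_of_lt_of_le hi hj
  have hright : (f' * (g - g')).coeff n = 0 := by
    refine coeff_mul_eq_zero_of_forall_add_ne fun i j hi hj => ne_of_gt ?_
    have hi : a ≤ i := le_of_not_gt fun hlt => hi (hf' i hlt)
    have hj : n - a < j := lt_of_not_ge fun hle => hj (by rw [coeff_sub, hgg' j hle, sub_self])
    simpa using add_lt_add_of_le_of_lt hi hj
  have hsplit : f * g = (f - f') * g + f' * (g - g') + f' * g' := by
    rw [sub_mul, mul_sub]; abel
  rw [hsplit, coeff_add, coeff_add, hleft, hright, zero_add, zero_add]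

theorem map_one_eq_zero_of_leibniz {R : Type*} [Ring R] (d : R →+ R)
    (hd : ∀ a b : R, d (a * b) = a * d b + d a * b) : d 1 = 0 := by
  simpa using hd 1 1

section
variable {R : Type*} [CommRing R] (d : R →+ R)

@[simp]
theorem coeffExt_coeff (f : HahnSeries ℤ R) (n : ℤ) : (coeffExt d f).coeff n = d (f.coeff n) :=
  rfl

theorem coeffExt_one (hd1 : d 1 = 0) : coeffExt d 1 = 0 := by
  ext n
  by_cases hn : n = 0 <;> simp [coeff_one, hn, hd1]

theorem fdb_two (hd1 : d 1 = 0) (h : HahnSeries ℤ R) : fdb d h 2 = coeffExt d h + h * h := by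
  simp [fdb, coeffExt_one d hd1]

theorem d_coeff_add_coeff_mul_self_eq_zero (hd1 : d 1 = 0) {h : HahnSeries ℤ R}
    (constraint : fdb d h 2 - C (2 * h.coeff 1) = single (-1 : ℤ) (1 : R) ^ 2)
    {n : ℤ} (hn : 0 < n) : d (h.coeff n) + (h * h).coeff n = 0 := by
  have := congrArg (coeff · n) constraint
  simp only [fdb_two d hd1, pow_two, single_mul_single, coeff_sub, coeff_add, coeffExt_coeff,
    C_apply, coeff_single, mul_one, hn.ne', if_false, sub_zero] at this
  rwa [if_neg (by omega)] at this

theorem coeff_mul_self_one_two_four {h : HahnSeries ℤ R}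
    (hz : h.coeff (-1) = 1) (h0 : h.coeff 0 = 0) (hpos : ∀ m : ℤ, 2 ≤ m → h.coeff (-m) = 0) :
    (h * h).coeff 1 = 2 * h.coeff 2 ∧
    (h * h).coeff 2 = 2 * h.coeff 3 + h.coeff 1 ^ 2 ∧
    (h * h).coeff 4 = 2 * h.coeff 5 + 2 * h.coeff 1 * h.coeff 3 + h.coeff 2 ^ 2 := by
  set t : HahnSeries ℤ R := single (-1) 1 + single 1 (h.coeff 1) + single 2 (h.coeff 2)
    + single 3 (h.coeff 3) + single 4 (h.coeff 4) + single 5 (h.coeff 5)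
  have hh_low : ∀ i < -1, h.coeff i = 0 := fun i hi => by simpa using hpos (-i) (by omega)
  have ht_low : ∀ i < -1, t.coeff i = 0 := fun i hi => by
    simp only [t, coeff_add, coeff_single]
    split_ifs <;> first | omega | simp
  have hht : ∀ i ≤ 5, h.coeff i = t.coeff i := fun i hi => by
    rcases lt_or_ge i (-1) with hlt | hge
    · rw [hh_low i hlt, ht_low i hlt]
    · interval_cases i <;> simp [t, hz, h0]
  have htrunc : ∀ n ≤ 4, (h * h).coeff n = (t * t).coeff n := fun n hn =>
    coeff_mul_eq_of_coeff_eq ht_low hh_low (fun i hi => hht i (by omega))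
      (fun j hj => hht j (by omega))
  refine ⟨?_, ?_, ?_⟩ <;> rw [htrunc _ (by norm_num)] <;>
    simp [t, add_mul, coeff_single_mul] <;> ring

end

theorem kdv_stationary_weierstrass_general
    {R : Type*} [CommRing R] (d : R →+ R)
    (hd : ∀ a b : R, d (a * b) = a * d b + d a * b)
    (h : HahnSeries ℤ R)
    (hz : h.coeff (-1) = 1)
    (h0 : h.coeff 0 = 0)
    (hpos : ∀ m : ℤ, 2 ≤ m → h.coeff (-m) = 0)
    (constraint : fdb d h 2 - HahnSeries.C (2 * h.coeff 1) =
      (HahnSeries.single (-1 : ℤ) (1 : R)) ^ 2)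
    (st2 : d (h.coeff 4 - h.coeff 1 * h.coeff 2) = 0) :
    (d (h.coeff 1)) ^ 2 = 4 * h.coeff 1 ^ 3
      + 8 * (h.coeff 3 - h.coeff 1 ^ 2) * h.coeff 1
      + 8 * (h.coeff 5 - h.coeff 1 * h.coeff 3) := by
  have hd1 := map_one_eq_zero_of_leibniz d hd
  obtain ⟨sq1, sq2, sq4⟩ := coeff_mul_self_one_two_four hz h0 hpos
  have e1 := d_coeff_add_coeff_mul_self_eq_zero d hd1 constraint (n := 1) (by norm_num)
  have e2 := d_coeff_add_coeff_mul_self_eq_zero d hd1 constraint (n := 2) (by norm_num)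
  have e4 := d_coeff_add_coeff_mul_self_eq_zero d hd1 constraint (n := 4) (by norm_num)
  rw [sq1] at e1
  rw [sq2] at e2
  rw [sq4] at e4
  have hd4 : d (h.coeff 4) = h.coeff 1 * d (h.coeff 2) + d (h.coeff 1) * h.coeff 2 := by
    rw [map_sub, sub_eq_zero] at st2
    rw [st2, hd]
  linear_combination (d (h.coeff 1) + 2 * h.coeff 2) * e1 + 4 * h.coeff 1 * e2 - 4 * e4 + 4 * hd4

/-- Let `h = z + Σ_{l ≥ 1} h_l z^(-l)` in `R((z⁻¹))`.  Assume the KdV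
constraint `h^(2) - 2h_1 = z²` and that `h_3 - h_1²`, `h_4 - h_1h_2`,
`h_5 - h_1h_3` are constants (annihilated by `d`).  Then
`(d h_1)² = 4h_1³ + 8(h_3 - h_1²)h_1 + 8(h_5 - h_1h_3)`:
`h_1` satisfies the Weierstrass equation of an elliptic curve. -/
theorem kdv_stationary_weierstrass
    {R : Type*} [CommRing R] (d : R →+ R)
    (hd : ∀ a b : R, d (a * b) = a * d b + d a * b)
    (h : HahnSeries ℤ R)
    (hz : h.coeff (-1) = 1)
    (h0 : h.coeff 0 = 0)
    (hpos : ∀ m : ℤ, 2 ≤ m → h.coeff (-m) = 0)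
    (constraint : fdb d h 2 - HahnSeries.C (2 * h.coeff 1) =
      (HahnSeries.single (-1 : ℤ) (1 : R)) ^ 2)
    (st1 : d (h.coeff 3 - h.coeff 1 ^ 2) = 0)
    (st2 : d (h.coeff 4 - h.coeff 1 * h.coeff 2) = 0)
    (st3 : d (h.coeff 5 - h.coeff 1 * h.coeff 3) = 0) :
    (d (h.coeff 1)) ^ 2 = 4 * h.coeff 1 ^ 3
      + 8 * (h.coeff 3 - h.coeff 1 ^ 2) * h.coeff 1
      + 8 * (h.coeff 5 - h.coeff 1 * h.coeff 3) :=
  kdv_stationary_weierstrass_general d hd h hz h0 hpos constraint st2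
end
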